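/- arXiv:1101.5810 — 3 statements merged into one kernel-verified Lean document; each statement's English description precedes it below -/
import Mathlib

section
/- In the braid group algebra, the braided binomials satisfy B(m+n, k) ∘ B(m, n) = B(m, n+k) ∘ B(n, k)^{[m]}, where B(n,k)^{[m]} denotes the braided binomial acting on strands m+1 through m+n+k. -/
/- We work in the braid group algebra, modelled as an associative ring `A` equipped with a
family `ψ i` of elements satisfying the braid relations.  The braided binomials `Bb`
(sums of Matsumoto lifts of shuffle permutations) are encoded through their defining
recursion `B(r+1,s) = B(r,s)^{[1]} + B(r+1,s-1)^{[1]} · T_{r+1,1}`. -/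

variable {A : Type*} [Ring A]

/-- Shift of the generator family by `k`: `(shiftFam ψ k) i = ψ (i + k)`. -/
def shiftFam (ψ : ℕ → A) (k : ℕ) : ℕ → A := fun i => ψ (i + k)

/-- The descending product `ψ (j+n-1) ⋯ ψ (j+1) ψ j`. -/
def fall (ψ : ℕ → A) : ℕ → ℕ → A
  | _, 0 => 1
  | j, n + 1 => fall ψ (j + 1) n * ψ j

/-- `T_{m,n} = (ψ_n ⋯ ψ_1)(ψ_{n+1} ⋯ ψ_2) ⋯ (ψ_{n+m-1} ⋯ ψ_m)`, the braiding of the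
first `m` strands past the next `n` strands. -/
def Tb (ψ : ℕ → A) : ℕ → ℕ → A
  | 0, _ => 1
  | m + 1, n => Tb ψ m n * fall ψ (m + 1) n

/-- The braided binomial `B(r,s)`: the sum of the Matsumoto lifts of all `(r,s)`-shuffle
permutations. -/
def Bb (ψ : ℕ → A) : ℕ → ℕ → A
  | 0, _ => 1
  | _ + 1, 0 => 1
  | r + 1, s + 1 =>
      Bb (shiftFam ψ 1) r (s + 1) + Bb (shiftFam ψ 1) (r + 1) s * Tb ψ (r + 1) 1
  termination_by r s => (r, s)

set_option linter.unusedSectionVars false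


lemma Bb_zero_left (ψ : ℕ → A) (s : ℕ) : Bb ψ 0 s = 1 := by simp [Bb]
lemma Bb_zero_right (ψ : ℕ → A) (r : ℕ) : Bb ψ r 0 = 1 := by cases r <;> simp [Bb]
lemma Bb_succ (ψ : ℕ → A) (r s : ℕ) :
    Bb ψ (r+1) (s+1) = Bb (shiftFam ψ 1) r (s+1) + Bb (shiftFam ψ 1) (r+1) s * Tb ψ (r+1) 1 := by
  rw [Bb]
lemma Tb_zero (ψ : ℕ → A) : Tb ψ 0 1 = 1 := rfl
lemma Tb_one_succ (ψ : ℕ → A) (m : ℕ) : Tb ψ (m+1) 1 = Tb ψ m 1 * ψ (m+1) := by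
  simp [Tb, fall]
lemma shiftFam_zero (ψ : ℕ → A) : shiftFam ψ 0 = ψ := rfl
lemma shiftFam_shiftFam (ψ : ℕ → A) (a b : ℕ) :
    shiftFam (shiftFam ψ a) b = shiftFam ψ (b + a) := by
  funext i; simp [shiftFam, Nat.add_assoc]
lemma shiftFam_apply (ψ : ℕ → A) (t i : ℕ) : shiftFam ψ t i = ψ (i + t) := rfl

lemma hbraid_shift (ψ : ℕ → A)
    (hb : ∀ i, ψ i * ψ (i + 1) * ψ i = ψ (i + 1) * ψ i * ψ (i + 1)) (t : ℕ) :
    ∀ i, shiftFam ψ t i * shiftFam ψ t (i + 1) * shiftFam ψ t i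
      = shiftFam ψ t (i + 1) * shiftFam ψ t i * shiftFam ψ t (i + 1) := by
  intro i
  simp only [shiftFam_apply]
  rw [show i + 1 + t = i + t + 1 from by omega]
  exact hb (i + t)

lemma hcomm_shift (ψ : ℕ → A)
    (hc : ∀ i j, i + 2 ≤ j → ψ i * ψ j = ψ j * ψ i) (t : ℕ) :
    ∀ i j, i + 2 ≤ j → shiftFam ψ t i * shiftFam ψ t j = shiftFam ψ t j * shiftFam ψ t i := by
  intro i j h
  simp only [shiftFam_apply]
  exact hc (i + t) (j + t) (by omega)

section
variable (ψ : ℕ → A)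
  (hb : ∀ i, ψ i * ψ (i + 1) * ψ i = ψ (i + 1) * ψ i * ψ (i + 1))
  (hc : ∀ i j, i + 2 ≤ j → ψ i * ψ j = ψ j * ψ i)

include hc in
lemma psi_comm_Tb (j : ℕ) : ∀ a, a + 2 ≤ j → ψ j * Tb ψ a 1 = Tb ψ a 1 * ψ j := by
  intro a
  induction a with
  | zero => intro _; simp [Tb]
  | succ a ih =>
    intro h
    rw [Tb_one_succ, ← mul_assoc, ih (by omega), mul_assoc,
      ← hc (a + 1) j (by omega), ← mul_assoc]

include hb hc in
lemma delta_conj : ∀ a i, 1 ≤ i → i + 1 ≤ a → Tb ψ a 1 * ψ i = ψ (i + 1) * Tb ψ a 1 := by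
  intro a
  induction a with
  | zero => intro i _ h; omega
  | succ a ih =>
    intro i hi h
    by_cases hia : i + 1 ≤ a
    · rw [Tb_one_succ, mul_assoc, ← hc i (a + 1) (by omega), ← mul_assoc, ih i hi hia,
        mul_assoc]
    · have : i = a := by omega
      subst this
      obtain ⟨b, rfl⟩ : ∃ b, i = b + 1 := ⟨i - 1, by omega⟩
      calc Tb ψ (b + 1 + 1) 1 * ψ (b + 1)
          = Tb ψ b 1 * (ψ (b + 1) * ψ (b + 1 + 1) * ψ (b + 1)) := by
            rw [Tb_one_succ, Tb_one_succ]; simp only [mul_assoc]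
        _ = Tb ψ b 1 * (ψ (b + 1 + 1) * ψ (b + 1) * ψ (b + 1 + 1)) := by rw [hb (b + 1)]
        _ = ψ (b + 1 + 1) * Tb ψ b 1 * (ψ (b + 1) * ψ (b + 1 + 1)) := by
            rw [psi_comm_Tb ψ hc (b + 1 + 1) b (by omega)]; simp only [mul_assoc]
        _ = ψ (b + 1 + 1) * Tb ψ (b + 1 + 1) 1 := by
            rw [Tb_one_succ, Tb_one_succ]; simp only [mul_assoc]

include hb hc in
lemma Tb_comm_Tb (a : ℕ) : ∀ c t, t + c + 1 ≤ a →
    Tb ψ a 1 * Tb (shiftFam ψ t) c 1 = Tb (shiftFam ψ (t + 1)) c 1 * Tb ψ a 1 := by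
  intro c
  induction c with
  | zero => intro t _; simp [Tb]
  | succ c ih =>
    intro t h
    rw [Tb_one_succ, Tb_one_succ, ← mul_assoc, ih t (by omega), mul_assoc,
      shiftFam_apply, shiftFam_apply,
      delta_conj ψ hb hc a (c + 1 + t) (by omega) (by omega),
      show c + 1 + t + 1 = c + 1 + (t + 1) from by omega, ← mul_assoc]

include hb hc in
lemma Tb_comm_Bb (a : ℕ) : ∀ N r s t, r + s ≤ N → t + (r + s) ≤ a →
    Tb ψ a 1 * Bb (shiftFam ψ t) r s = Bb (shiftFam ψ (t + 1)) r s * Tb ψ a 1 := by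
  intro N
  induction N with
  | zero =>
    intro r s t h _
    obtain ⟨rfl, rfl⟩ : r = 0 ∧ s = 0 := by omega
    simp [Bb_zero_left]
  | succ N ih =>
    intro r s t hN h
    match r, s with
    | 0, s => simp [Bb_zero_left]
    | r + 1, 0 => simp [Bb_zero_right]
    | r + 1, s + 1 =>
      rw [Bb_succ, Bb_succ, shiftFam_shiftFam, shiftFam_shiftFam,
        show 1 + t = t + 1 from by omega, show 1 + (t + 1) = t + 2 from by omega,
        mul_add, add_mul,
        ih r (s + 1) (t + 1) (by omega) (by omega),
        ← mul_assoc, ih (r + 1) s (t + 1) (by omega) (by omega),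
        mul_assoc, Tb_comm_Tb ψ hb hc a (r + 1) t (by omega), ← mul_assoc, mul_assoc]

include hc in
lemma psi_comm_Tb_far (j t : ℕ) (hj : j + 1 ≤ t) :
    ∀ c, ψ j * Tb (shiftFam ψ t) c 1 = Tb (shiftFam ψ t) c 1 * ψ j := by
  intro c
  induction c with
  | zero => simp [Tb]
  | succ c ih =>
    rw [Tb_one_succ, ← mul_assoc, ih, mul_assoc, shiftFam_apply,
      hc j (c + 1 + t) (by omega), ← mul_assoc]

include hc in
lemma psi_comm_Bb_far (j : ℕ) : ∀ N r s t, r + s ≤ N → j + 1 ≤ t →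
    ψ j * Bb (shiftFam ψ t) r s = Bb (shiftFam ψ t) r s * ψ j := by
  intro N
  induction N with
  | zero =>
    intro r s t h _
    obtain ⟨rfl, rfl⟩ : r = 0 ∧ s = 0 := by omega
    simp [Bb_zero_left]
  | succ N ih =>
    intro r s t hN hj
    match r, s with
    | 0, s => simp [Bb_zero_left]
    | r + 1, 0 => simp [Bb_zero_right]
    | r + 1, s + 1 =>
      rw [Bb_succ, shiftFam_shiftFam, show 1 + t = t + 1 from by omega, mul_add, add_mul,
        ih r (s + 1) (t + 1) (by omega) (by omega),
        ← mul_assoc, ih (r + 1) s (t + 1) (by omega) (by omega),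
        mul_assoc, psi_comm_Tb_far ψ hc j t (by omega) (r + 1), ← mul_assoc]

include hc in
lemma Tb_comm_Bb_far (r s : ℕ) : ∀ a t, a + 1 ≤ t →
    Tb ψ a 1 * Bb (shiftFam ψ t) r s = Bb (shiftFam ψ t) r s * Tb ψ a 1 := by
  intro a
  induction a with
  | zero => intro t _; simp [Tb]
  | succ a ih =>
    intro t h
    rw [Tb_one_succ, mul_assoc, psi_comm_Bb_far ψ hc (a + 1) (r + s) r s t le_rfl (by omega),
      ← mul_assoc, ih t (by omega), mul_assoc]

lemma Tb_one_split (a : ℕ) : ∀ b, Tb ψ (a + b) 1 = Tb ψ a 1 * Tb (shiftFam ψ a) b 1 := by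
  intro b
  induction b with
  | zero => simp [Tb]
  | succ b ih =>
    rw [show a + (b + 1) = (a + b) + 1 from rfl, Tb_one_succ, ih, Tb_one_succ, mul_assoc,
      shiftFam_apply, show b + 1 + a = a + b + 1 from by omega]

end

lemma key : ∀ (N : ℕ) (ψ : ℕ → A),
    (∀ i, ψ i * ψ (i + 1) * ψ i = ψ (i + 1) * ψ i * ψ (i + 1)) →
    (∀ i j, i + 2 ≤ j → ψ i * ψ j = ψ j * ψ i) →
    ∀ m n k, m + n + k ≤ N →
    Bb ψ (m + n) k * Bb ψ m n = Bb ψ m (n + k) * Bb (shiftFam ψ m) n k := by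
  intro N
  induction N with
  | zero =>
    intro ψ hb hc m n k h
    obtain ⟨rfl, rfl, rfl⟩ : m = 0 ∧ n = 0 ∧ k = 0 := by omega
    simp [Bb_zero_left]
  | succ N ih =>
    intro ψ hb hc m n k h
    rcases k with _ | k
    · simp [Bb_zero_right]
    rcases n with _ | n
    · simp [Bb_zero_left, Bb_zero_right]
    rcases m with _ | m
    · simp [Bb_zero_left, shiftFam_zero, Nat.zero_add]
    · -- main inductive case
      have hb1 := hbraid_shift ψ hb 1
      have hc1 := hcomm_shift ψ hc 1
      -- IH instances
      have I1 : Bb (shiftFam ψ 1) (m + n + 1) (k + 1) * Bb (shiftFam ψ 1) m (n + 1)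
          = Bb (shiftFam ψ 1) m (n + k + 1 + 1)
            * Bb (shiftFam ψ (m + 1)) (n + 1) (k + 1) := by
        have := ih (shiftFam ψ 1) hb1 hc1 m (n + 1) (k + 1) (by omega)
        rwa [shiftFam_shiftFam, show m + (n + 1) = m + n + 1 from by omega,
          show n + 1 + (k + 1) = n + k + 1 + 1 from by omega] at this
      have I2 : Bb (shiftFam ψ 1) (m + n + 1) (k + 1) * Bb (shiftFam ψ 1) (m + 1) n
          = Bb (shiftFam ψ 1) (m + 1) (n + k + 1)
            * Bb (shiftFam ψ (m + 1 + 1)) n (k + 1) := by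
        have := ih (shiftFam ψ 1) hb1 hc1 (m + 1) n (k + 1) (by omega)
        rwa [shiftFam_shiftFam, show m + 1 + n = m + n + 1 from by omega,
          show n + (k + 1) = n + k + 1 from by omega] at this
      have I3 : Bb (shiftFam ψ 1) (m + n + 1 + 1) k * Bb (shiftFam ψ 1) (m + 1) (n + 1)
          = Bb (shiftFam ψ 1) (m + 1) (n + k + 1)
            * Bb (shiftFam ψ (m + 1 + 1)) (n + 1) k := by
        have := ih (shiftFam ψ 1) hb1 hc1 (m + 1) (n + 1) k (by omega)
        rwa [shiftFam_shiftFam, show m + 1 + (n + 1) = m + n + 1 + 1 from by omega,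
          show n + 1 + k = n + k + 1 from by omega] at this
      -- commutation facts
      have C1eq : Tb ψ (m + n + 1 + 1) 1 * Bb (shiftFam ψ 1) m (n + 1)
          = Bb (shiftFam ψ (1 + 1)) m (n + 1) * Tb ψ (m + n + 1 + 1) 1 :=
        Tb_comm_Bb ψ hb hc (m + n + 1 + 1) (m + n + 1) m (n + 1) 1 (by omega) (by omega)
      have C2eq : Tb ψ (m + n + 1 + 1) 1 * Bb (shiftFam ψ 1) (m + 1) n
          = Bb (shiftFam ψ (1 + 1)) (m + 1) n * Tb ψ (m + n + 1 + 1) 1 :=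
        Tb_comm_Bb ψ hb hc (m + n + 1 + 1) (m + n + 1) (m + 1) n 1 (by omega) (by omega)
      have C3eq : Tb ψ (m + n + 1 + 1) 1 * Tb ψ (m + 1) 1
          = Tb (shiftFam ψ 1) (m + 1) 1 * Tb ψ (m + n + 1 + 1) 1 := by
        have := Tb_comm_Tb ψ hb hc (m + n + 1 + 1) (m + 1) 0 (by omega)
        simpa [shiftFam_zero, Nat.zero_add] using this
      have R1 : Bb (shiftFam ψ (1 + 1)) m (n + 1)
            + Bb (shiftFam ψ (1 + 1)) (m + 1) n * Tb (shiftFam ψ 1) (m + 1) 1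
          = Bb (shiftFam ψ 1) (m + 1) (n + 1) := by
        rw [Bb_succ (shiftFam ψ 1) m n, shiftFam_shiftFam]
      -- the Pascal-type identity on the right factors
      have Tsplit : Tb ψ (m + n + 1 + 1) 1
          = Tb ψ (m + 1) 1 * Tb (shiftFam ψ (m + 1)) (n + 1) 1 := by
        have := Tb_one_split ψ (m + 1) (n + 1)
        rwa [show m + 1 + (n + 1) = m + n + 1 + 1 from by omega] at this
      have Φexp : Bb (shiftFam ψ (m + 1)) (n + 1) (k + 1)
          = Bb (shiftFam ψ (m + 1 + 1)) n (k + 1)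
            + Bb (shiftFam ψ (m + 1 + 1)) (n + 1) k * Tb (shiftFam ψ (m + 1)) (n + 1) 1 := by
        rw [Bb_succ (shiftFam ψ (m + 1)) n k, shiftFam_shiftFam,
          show 1 + (m + 1) = m + 1 + 1 from by omega]
      have hS : Bb (shiftFam ψ (m + 1 + 1)) n (k + 1) * Tb ψ (m + 1) 1
            + Bb (shiftFam ψ (m + 1 + 1)) (n + 1) k * Tb ψ (m + n + 1 + 1) 1
          = Tb ψ (m + 1) 1 * Bb (shiftFam ψ (m + 1)) (n + 1) (k + 1) := by
        calc Bb (shiftFam ψ (m + 1 + 1)) n (k + 1) * Tb ψ (m + 1) 1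
              + Bb (shiftFam ψ (m + 1 + 1)) (n + 1) k * Tb ψ (m + n + 1 + 1) 1
            = Tb ψ (m + 1) 1 * Bb (shiftFam ψ (m + 1 + 1)) n (k + 1)
              + Bb (shiftFam ψ (m + 1 + 1)) (n + 1) k
                * (Tb ψ (m + 1) 1 * Tb (shiftFam ψ (m + 1)) (n + 1) 1) := by
              rw [← Tb_comm_Bb_far ψ hc n (k + 1) (m + 1) (m + 1 + 1) (by omega), Tsplit]
          _ = Tb ψ (m + 1) 1 * Bb (shiftFam ψ (m + 1 + 1)) n (k + 1)
              + Tb ψ (m + 1) 1 * (Bb (shiftFam ψ (m + 1 + 1)) (n + 1) k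
                * Tb (shiftFam ψ (m + 1)) (n + 1) 1) := by
              rw [← mul_assoc,
                ← Tb_comm_Bb_far ψ hc (n + 1) k (m + 1) (m + 1 + 1) (by omega), mul_assoc]
          _ = Tb ψ (m + 1) 1 * Bb (shiftFam ψ (m + 1)) (n + 1) (k + 1) := by
              rw [Φexp, mul_add]
      -- assemble
      rw [show m + 1 + (n + 1) = m + n + 1 + 1 from by omega,
        show n + 1 + (k + 1) = n + k + 1 + 1 from by omega]
      calc Bb ψ (m + n + 1 + 1) (k + 1) * Bb ψ (m + 1) (n + 1)
          = (Bb (shiftFam ψ 1) (m + n + 1) (k + 1)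
              + Bb (shiftFam ψ 1) (m + n + 1 + 1) k * Tb ψ (m + n + 1 + 1) 1)
            * (Bb (shiftFam ψ 1) m (n + 1)
              + Bb (shiftFam ψ 1) (m + 1) n * Tb ψ (m + 1) 1) := by
            rw [Bb_succ ψ (m + n + 1) k, Bb_succ ψ m n]
        _ = Bb (shiftFam ψ 1) (m + n + 1) (k + 1) * Bb (shiftFam ψ 1) m (n + 1)
            + Bb (shiftFam ψ 1) (m + n + 1) (k + 1)
              * (Bb (shiftFam ψ 1) (m + 1) n * Tb ψ (m + 1) 1)
            + (Bb (shiftFam ψ 1) (m + n + 1 + 1) k * Tb ψ (m + n + 1 + 1) 1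
                * Bb (shiftFam ψ 1) m (n + 1)
              + Bb (shiftFam ψ 1) (m + n + 1 + 1) k * Tb ψ (m + n + 1 + 1) 1
                * (Bb (shiftFam ψ 1) (m + 1) n * Tb ψ (m + 1) 1)) := by
            rw [add_mul, mul_add, mul_add]
        _ = Bb (shiftFam ψ 1) (m + n + 1) (k + 1) * Bb (shiftFam ψ 1) m (n + 1)
            + Bb (shiftFam ψ 1) (m + n + 1) (k + 1)
              * (Bb (shiftFam ψ 1) (m + 1) n * Tb ψ (m + 1) 1)
            + Bb (shiftFam ψ 1) (m + n + 1 + 1) k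
              * ((Bb (shiftFam ψ (1 + 1)) m (n + 1)
                + Bb (shiftFam ψ (1 + 1)) (m + 1) n * Tb (shiftFam ψ 1) (m + 1) 1)
                * Tb ψ (m + n + 1 + 1) 1) := by
            rw [mul_assoc (Bb (shiftFam ψ 1) (m + n + 1 + 1) k) (Tb ψ (m + n + 1 + 1) 1)
                (Bb (shiftFam ψ 1) m (n + 1)), C1eq,
              mul_assoc (Bb (shiftFam ψ 1) (m + n + 1 + 1) k) (Tb ψ (m + n + 1 + 1) 1),
              ← mul_assoc (Tb ψ (m + n + 1 + 1) 1) (Bb (shiftFam ψ 1) (m + 1) n)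
                (Tb ψ (m + 1) 1), C2eq,
              mul_assoc (Bb (shiftFam ψ (1 + 1)) (m + 1) n) (Tb ψ (m + n + 1 + 1) 1)
                (Tb ψ (m + 1) 1), C3eq,
              add_mul, mul_add, ← mul_assoc (Bb (shiftFam ψ (1 + 1)) (m + 1) n)
                (Tb (shiftFam ψ 1) (m + 1) 1) (Tb ψ (m + n + 1 + 1) 1)]
        _ = Bb (shiftFam ψ 1) m (n + k + 1 + 1) * Bb (shiftFam ψ (m + 1)) (n + 1) (k + 1)
            + Bb (shiftFam ψ 1) (m + 1) (n + k + 1)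
              * Bb (shiftFam ψ (m + 1 + 1)) n (k + 1) * Tb ψ (m + 1) 1
            + Bb (shiftFam ψ 1) (m + 1) (n + k + 1)
              * Bb (shiftFam ψ (m + 1 + 1)) (n + 1) k * Tb ψ (m + n + 1 + 1) 1 := by
            rw [R1, I1, ← mul_assoc (Bb (shiftFam ψ 1) (m + n + 1) (k + 1))
                (Bb (shiftFam ψ 1) (m + 1) n) (Tb ψ (m + 1) 1), I2,
              ← mul_assoc (Bb (shiftFam ψ 1) (m + n + 1 + 1) k)
                (Bb (shiftFam ψ 1) (m + 1) (n + 1)) (Tb ψ (m + n + 1 + 1) 1), I3]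
        _ = Bb (shiftFam ψ 1) m (n + k + 1 + 1) * Bb (shiftFam ψ (m + 1)) (n + 1) (k + 1)
            + Bb (shiftFam ψ 1) (m + 1) (n + k + 1)
              * (Bb (shiftFam ψ (m + 1 + 1)) n (k + 1) * Tb ψ (m + 1) 1
                + Bb (shiftFam ψ (m + 1 + 1)) (n + 1) k * Tb ψ (m + n + 1 + 1) 1) := by
            rw [mul_add, ← mul_assoc, ← mul_assoc, add_assoc]
        _ = Bb (shiftFam ψ 1) m (n + k + 1 + 1) * Bb (shiftFam ψ (m + 1)) (n + 1) (k + 1)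
            + Bb (shiftFam ψ 1) (m + 1) (n + k + 1)
              * (Tb ψ (m + 1) 1 * Bb (shiftFam ψ (m + 1)) (n + 1) (k + 1)) := by
            rw [hS]
        _ = Bb ψ (m + 1) (n + k + 1 + 1) * Bb (shiftFam ψ (m + 1)) (n + 1) (k + 1) := by
            rw [Bb_succ ψ m (n + k + 1), add_mul, mul_assoc]

/-- `B(m+n, k) ∘ B(m, n) = B(m, n+k) ∘ B(n, k)^{[m]}` in the braid group
algebra, where `B(n,k)^{[m]}` acts on strands `m+1, …, m+n+k`. -/
theorem braided_binomial_composition (ψ : ℕ → A)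
    (hbraid : ∀ i, ψ i * ψ (i + 1) * ψ i = ψ (i + 1) * ψ i * ψ (i + 1))
    (hcomm : ∀ i j, i + 2 ≤ j → ψ i * ψ j = ψ j * ψ i)
    (m n k : ℕ) :
    Bb ψ (m + n) k * Bb ψ m n = Bb ψ m (n + k) * Bb (shiftFam ψ m) n k := by
  exact key (m + n + k) ψ hbraid hcomm m n k le_rfl
end

section
/- The braided factorial factorizes as S_{m+n} = B(m, n) ∘ (S_m ⊗ S_n), i.e., the total braided symmetrizer on m+n strands equals the braided binomial B(m,n) composed with the tensor product of the total symmetrizers on the first m and last n strands. -/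
/- We work in the braid group algebra, modelled as an associative ring `A` equipped with a
family `ψ i` of elements satisfying the braid relations.  The braided binomials `Bb`
(sums of Matsumoto lifts of shuffle permutations) are encoded through their defining
recursion `B(r+1,s) = B(r,s)^{[1]} + B(r+1,s-1)^{[1]} · T_{r+1,1}`. -/

variable {A : Type*} [Ring A]

/-- The braided factorial (total braided symmetrizer) `S_n`, the sum of the Matsumoto
lifts of all permutations of `n` strands; `S_{n+1} = B(1,n) · S_n^{[1]}`. -/
def Sfac (ψ : ℕ → A) : ℕ → A
  | 0 => 1
  | n + 1 => Bb ψ 1 n * Sfac (shiftFam ψ 1) n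

namespace BraidedFact
set_option linter.unusedSectionVars false

variable {A : Type*} [Ring A]

/-- Commutation hypothesis for distant generators. -/
def HC (ψ : ℕ → A) : Prop := ∀ i j, i + 2 ≤ j → ψ i * ψ j = ψ j * ψ i
/-- Braid relation hypothesis. -/
def HB (ψ : ℕ → A) : Prop := ∀ i, ψ i * ψ (i + 1) * ψ i = ψ (i + 1) * ψ i * ψ (i + 1)

lemma shiftFam_zero (ψ : ℕ → A) : shiftFam ψ 0 = ψ := rfl

lemma shiftFam_comp (ψ : ℕ → A) (a b : ℕ) :
    shiftFam (shiftFam ψ a) b = shiftFam ψ (a + b) := by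
  funext i; simp only [shiftFam]; congr 1; omega

lemma HC.shift {ψ : ℕ → A} (h : HC ψ) (k : ℕ) : HC (shiftFam ψ k) := by
  intro i j hij
  simpa only [shiftFam] using h (i + k) (j + k) (by omega)

lemma HB.shift {ψ : ℕ → A} (h : HB ψ) (k : ℕ) : HB (shiftFam ψ k) := by
  intro i
  simpa only [shiftFam, show i + 1 + k = i + k + 1 from by omega] using h (i + k)

lemma fall_succ (ψ : ℕ → A) (j n : ℕ) : fall ψ j (n+1) = fall ψ (j+1) n * ψ j := rfl

lemma fall_shift (ψ : ℕ → A) (k n j : ℕ) :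
    fall (shiftFam ψ k) j n = fall ψ (j + k) n := by
  induction n generalizing j with
  | zero => rfl
  | succ n ih =>
      rw [fall_succ, fall_succ, ih (j+1)]
      show fall ψ (j+1+k) n * ψ (j + k) = _
      rw [show j+1+k = j+k+1 from by omega]

lemma fall_top (ψ : ℕ → A) (n j : ℕ) : fall ψ j (n + 1) = ψ (j + n) * fall ψ j n := by
  induction n generalizing j with
  | zero => simp [fall]
  | succ n ih =>
      rw [fall_succ, ih (j+1), fall_succ, mul_assoc,
        show j + 1 + n = j + (n+1) from by omega]

lemma fall_append (ψ : ℕ → A) (j a b : ℕ) :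
    fall ψ j (a + b) = fall ψ (j + b) a * fall ψ j b := by
  induction b generalizing j with
  | zero => simp [fall]
  | succ b ih =>
      rw [show a + (b+1) = (a+b)+1 from rfl, fall_succ, ih (j+1), fall_succ,
        mul_assoc, show j + 1 + b = j + (b+1) from by omega]

lemma commute_psi_fall_low {ψ : ℕ → A} (hc : HC ψ) (i : ℕ) :
    ∀ n j, i + 2 ≤ j → Commute (ψ i) (fall ψ j n)
  | 0, j, _ => Commute.one_right _
  | n+1, j, h => by
      rw [fall_succ]
      exact (commute_psi_fall_low hc i n (j+1) (by omega)).mul_right (hc i j h)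

lemma commute_psi_fall_high {ψ : ℕ → A} (hc : HC ψ) (i : ℕ) :
    ∀ n j, j + n + 1 ≤ i → Commute (ψ i) (fall ψ j n)
  | 0, j, _ => Commute.one_right _
  | n+1, j, h => by
      rw [fall_succ]
      exact (commute_psi_fall_high hc i n (j+1) (by omega)).mul_right
        ((hc j i (by omega)).symm)

lemma commute_fall_fall {ψ : ℕ → A} (hc : HC ψ) :
    ∀ n1 j1 j2 n2, j1 + n1 + 1 ≤ j2 → Commute (fall ψ j1 n1) (fall ψ j2 n2)
  | 0, _, _, _, _ => Commute.one_left _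
  | n1+1, j1, j2, n2, h => by
      rw [fall_succ]
      exact (commute_fall_fall hc n1 (j1+1) j2 n2 (by omega)).mul_left
        (commute_psi_fall_low hc j1 n2 j2 (by omega))

lemma commute_Tb_fall {ψ : ℕ → A} (hc : HC ψ) :
    ∀ m k j l, m + k + 1 ≤ j → Commute (Tb ψ m k) (fall ψ j l)
  | 0, _, _, _, _ => Commute.one_left _
  | m+1, k, j, l, h => by
      show Commute (Tb ψ m k * fall ψ (m+1) k) _
      exact (commute_Tb_fall hc m k j l (by omega)).mul_left
        (commute_fall_fall hc k (m+1) j l (by omega))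

lemma commute_psi_Tb {ψ : ℕ → A} (hc : HC ψ) :
    ∀ m k i, m + k + 1 ≤ i → Commute (ψ i) (Tb ψ m k)
  | 0, _, _, _ => Commute.one_right _
  | m+1, k, i, h => by
      show Commute _ (Tb ψ m k * fall ψ (m+1) k)
      exact (commute_psi_Tb hc m k i (by omega)).mul_right
        (commute_psi_fall_high hc i k (m+1) (by omega))

lemma commute_psi_Bb_aux :
    ∀ (N : ℕ) (ψ : ℕ → A), HC ψ → ∀ r s i, r + s ≤ N → r + s + 1 ≤ i →
      Commute (ψ i) (Bb ψ r s) := by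
  intro N
  induction N with
  | zero =>
      intro ψ hc r s i hN hi
      obtain rfl : r = 0 := by omega
      rw [Bb]; exact Commute.one_right _
  | succ N ih =>
      intro ψ hc r s i hN hi
      match r, s with
      | 0, s => rw [Bb]; exact Commute.one_right _
      | r+1, 0 => rw [Bb]; exact Commute.one_right _
      | r+1, s+1 =>
        obtain ⟨i', rfl⟩ : ∃ i', i = i' + 1 := ⟨i - 1, by omega⟩
        rw [Bb]
        have h1 : Commute (ψ (i'+1)) (Bb (shiftFam ψ 1) r (s+1)) :=
          ih (shiftFam ψ 1) (hc.shift 1) r (s+1) i' (by omega) (by omega)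
        have h2 : Commute (ψ (i'+1)) (Bb (shiftFam ψ 1) (r+1) s) :=
          ih (shiftFam ψ 1) (hc.shift 1) (r+1) s i' (by omega) (by omega)
        exact h1.add_right (h2.mul_right (commute_psi_Tb hc (r+1) 1 (i'+1) (by omega)))

lemma commute_psi_Bb {ψ : ℕ → A} (hc : HC ψ) (r s i : ℕ) (h : r + s + 1 ≤ i) :
    Commute (ψ i) (Bb ψ r s) :=
  commute_psi_Bb_aux (r+s) ψ hc r s i le_rfl h

lemma commute_Bb_fall {ψ : ℕ → A} (hc : HC ψ) (r s : ℕ) :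
    ∀ l j, r + s + 1 ≤ j → Commute (Bb ψ r s) (fall ψ j l)
  | 0, _, _ => Commute.one_right _
  | l+1, j, h => by
      rw [fall_succ]
      exact (commute_Bb_fall hc r s l (j+1) (by omega)).mul_right
        (commute_psi_Bb hc r s j h).symm

lemma conj_psi_core {ψ : ℕ → A} (hb : HB ψ) (hc : HC ψ) (d e : ℕ) :
    fall ψ 1 (d+1+1+e) * ψ (d+1+1) = ψ (d+1) * fall ψ 1 (d+1+1+e) := by
  have c1 : Commute (ψ (d+1+1)) (fall ψ 1 d) :=
    commute_psi_fall_high hc (d+1+1) d 1 (by omega)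
  have c2 : Commute (ψ (d+1)) (fall ψ (d+1+1+1) e) :=
    commute_psi_fall_low hc (d+1) e (d+1+1+1) (by omega)
  have braid := hb (d+1)
  have hsplit : fall ψ 1 (d+1+1+e)
      = fall ψ (d+1+1+1) e * (ψ (d+1+1) * (ψ (d+1) * fall ψ 1 d)) := by
    rw [show d+1+1+e = e + (d+1+1) from by omega, fall_append ψ 1 e (d+1+1),
      fall_top ψ (d+1) 1, fall_top ψ d 1,
      show 1+(d+1+1) = d+1+1+1 from by omega, show 1+(d+1) = d+1+1 from by omega,
      show 1+d = d+1 from by omega]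
  rw [hsplit]
  set a := ψ (d+1)
  set b := ψ (d+1+1)
  set F1 := fall ψ (d+1+1+1) e
  set F0 := fall ψ 1 d
  have key : b * (a * (b * F0)) = a * (b * (a * F0)) := by
    rw [← mul_assoc, ← mul_assoc, braid.symm, mul_assoc, mul_assoc]
  calc F1 * (b * (a * F0)) * b
      = F1 * (b * (a * (F0 * b))) := by simp only [mul_assoc]
    _ = F1 * (b * (a * (b * F0))) := by rw [← c1.eq]
    _ = F1 * (a * (b * (a * F0))) := by rw [key]
    _ = a * (F1 * (b * (a * F0))) := by rw [← mul_assoc, ← c2.eq, mul_assoc]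

lemma conj_psi {ψ : ℕ → A} (hb : HB ψ) (hc : HC ψ) {N i : ℕ}
    (h1 : 1 ≤ i) (h2 : i + 1 ≤ N) :
    fall ψ 1 N * ψ (i+1) = ψ i * fall ψ 1 N := by
  obtain ⟨d, rfl⟩ : ∃ d, i = d + 1 := ⟨i - 1, by omega⟩
  obtain ⟨e, rfl⟩ : ∃ e, N = d + 1 + 1 + e := ⟨N - d - 2, by omega⟩
  exact conj_psi_core hb hc d e

lemma conj_fall {ψ : ℕ → A} (hb : HB ψ) (hc : HC ψ) (N : ℕ) :
    ∀ k j, 1 ≤ j → j + k ≤ N →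
      fall ψ 1 N * fall ψ (j+1) k = fall ψ j k * fall ψ 1 N
  | 0, j, _, _ => by simp [fall]
  | k+1, j, h1, h2 => by
      rw [fall_succ, fall_succ, ← mul_assoc,
        show j+1+1 = (j+1)+1 from rfl,
        conj_fall hb hc N k (j+1) (by omega) (by omega),
        mul_assoc, conj_psi hb hc h1 (by omega), ← mul_assoc]

lemma conj_Tb {ψ : ℕ → A} (hb : HB ψ) (hc : HC ψ) (N : ℕ) :
    ∀ m c l, c + m + l ≤ N →
      fall ψ 1 N * Tb (shiftFam ψ (c+1)) m l = Tb (shiftFam ψ c) m l * fall ψ 1 N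
  | 0, c, l, _ => by simp [Tb]
  | m+1, c, l, h => by
      show fall ψ 1 N * (Tb (shiftFam ψ (c+1)) m l * fall (shiftFam ψ (c+1)) (m+1) l) = _
      rw [fall_shift, ← mul_assoc, conj_Tb hb hc N m c l (by omega), mul_assoc,
        show m+1+(c+1) = (m+c+1)+1 from by omega,
        conj_fall hb hc N l (m+c+1) (by omega) (by omega)]
      show _ = Tb (shiftFam ψ c) m l * fall (shiftFam ψ c) (m+1) l * fall ψ 1 N
      rw [fall_shift, show m+1+c = m+c+1 from by omega, mul_assoc]

lemma conj_Bb_aux :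
    ∀ (M : ℕ) (ψ : ℕ → A), HB ψ → HC ψ → ∀ (N : ℕ) (c r s : ℕ), r + s ≤ M → c + r + s ≤ N →
      fall ψ 1 N * Bb (shiftFam ψ (c+1)) r s = Bb (shiftFam ψ c) r s * fall ψ 1 N := by
  intro M
  induction M with
  | zero =>
      intro ψ hb hc N c r s hM hN
      obtain rfl : r = 0 := by omega
      rw [Bb, Bb]; simp
  | succ M ih =>
      intro ψ hb hc N c r s hM hN
      match r, s with
      | 0, s => rw [Bb, Bb]; simp
      | r+1, 0 => rw [Bb, Bb]; simp
      | r+1, s+1 =>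
        rw [Bb, Bb, shiftFam_comp ψ (c+1) 1, shiftFam_comp ψ c 1,
          show c+1+1 = (c+1)+1 from rfl]
        rw [mul_add, add_mul]
        congr 1
        · exact ih ψ hb hc N (c+1) r (s+1) (by omega) (by omega)
        · rw [← mul_assoc, ih ψ hb hc N (c+1) (r+1) s (by omega) (by omega),
            mul_assoc, conj_Tb hb hc N (r+1) c 1 (by omega), ← mul_assoc]

lemma conj_Bb {ψ : ℕ → A} (hb : HB ψ) (hc : HC ψ) {N r s : ℕ} (h : r + s ≤ N) :
    fall ψ 1 N * Bb (shiftFam ψ 1) r s = Bb ψ r s * fall ψ 1 N := by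
  have := conj_Bb_aux (r+s) ψ hb hc N 0 r s le_rfl (by omega)
  rwa [shiftFam_zero] at this

lemma fall_one (ψ : ℕ → A) (j : ℕ) : fall ψ j 1 = ψ j := by simp [fall]
lemma Bb_zero_left (ψ : ℕ → A) (s : ℕ) : Bb ψ 0 s = 1 := by rw [Bb]
lemma Bb_zero_right (ψ : ℕ → A) (m : ℕ) : Bb ψ m 0 = 1 := by cases m <;> rw [Bb]
lemma Tb_one_one (ψ : ℕ → A) : Tb ψ 1 1 = ψ 1 := by simp [Tb, fall]
lemma Tb_zero (ψ : ℕ → A) (n : ℕ) : Tb ψ 0 n = 1 := rfl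
lemma Tb_succ_one (ψ : ℕ → A) (m : ℕ) : Tb ψ (m+1) 1 = Tb ψ m 1 * ψ (m+1) := by
  show Tb ψ m 1 * fall ψ (m+1) 1 = _
  rw [fall_one]

lemma bbA_aux :
    ∀ (M : ℕ) (ψ : ℕ → A), HC ψ → ∀ r s, r + s ≤ M →
      Bb ψ (r+1) (s+1) = Bb ψ (r+1) s + Bb ψ r (s+1) * fall ψ (r+1) (s+1) := by
  intro M
  induction M with
  | zero =>
      intro ψ hc r s hM
      obtain ⟨rfl, rfl⟩ : r = 0 ∧ s = 0 := by omega
      simp [Bb, Tb, fall]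
  | succ M ih =>
      intro ψ hc r s hM
      match r, s with
      | 0, 0 => simp [Bb, Tb, fall]
      | 0, t+1 =>
        have e1 : Bb ψ (0+1) (t+1+1)
            = Bb (shiftFam ψ 1) 0 (t+1+1) + Bb (shiftFam ψ 1) (0+1) (t+1) * Tb ψ (0+1) 1 := by
          conv_lhs => rw [Bb]
        have e2 : Bb ψ (0+1) (t+1)
            = Bb (shiftFam ψ 1) 0 (t+1) + Bb (shiftFam ψ 1) (0+1) t * Tb ψ (0+1) 1 := by
          conv_lhs => rw [Bb]
        have e3 := ih (shiftFam ψ 1) (hc.shift 1) 0 t (by omega)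
        rw [e1, e2, e3, Bb_zero_left, Bb_zero_left, Bb_zero_left,
          fall_shift ψ 1 (t+1) (0+1), fall_succ ψ (0+1) (t+1), Tb_succ_one ψ 0, Tb_zero]
        noncomm_ring
      | q+1, 0 =>
        have e1 : Bb ψ (q+1+1) (0+1)
            = Bb (shiftFam ψ 1) (q+1) (0+1) + Bb (shiftFam ψ 1) (q+1+1) 0 * Tb ψ (q+1+1) 1 := by
          conv_lhs => rw [Bb]
        have e2 : Bb ψ (q+1) (0+1)
            = Bb (shiftFam ψ 1) q (0+1) + Bb (shiftFam ψ 1) (q+1) 0 * Tb ψ (q+1) 1 := by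
          conv_lhs => rw [Bb]
        have e3 := ih (shiftFam ψ 1) (hc.shift 1) q 0 (by omega)
        rw [e1, e2, e3, Bb_zero_right, Bb_zero_right, Bb_zero_right,
          fall_shift ψ 1 (0+1) (q+1), fall_one, Tb_succ_one ψ (q+1)]
        noncomm_ring
      | q+1, t+1 =>
        have e1 : Bb ψ (q+1+1) (t+1+1)
            = Bb (shiftFam ψ 1) (q+1) (t+1+1) + Bb (shiftFam ψ 1) (q+1+1) (t+1) * Tb ψ (q+1+1) 1 := by
          conv_lhs => rw [Bb]
        have e2 : Bb ψ (q+1+1) (t+1)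
            = Bb (shiftFam ψ 1) (q+1) (t+1) + Bb (shiftFam ψ 1) (q+1+1) t * Tb ψ (q+1+1) 1 := by
          conv_lhs => rw [Bb]
        have e3 : Bb ψ (q+1) (t+1+1)
            = Bb (shiftFam ψ 1) q (t+1+1) + Bb (shiftFam ψ 1) (q+1) (t+1) * Tb ψ (q+1) 1 := by
          conv_lhs => rw [Bb]
        have e4 := ih (shiftFam ψ 1) (hc.shift 1) q (t+1) (by omega)
        have e5 := ih (shiftFam ψ 1) (hc.shift 1) (q+1) t (by omega)
        rw [e1, e4, e5, e2, e3, fall_shift, fall_shift, Tb_succ_one]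
        rw [show q+1+1+1 = q+1+1+1 from rfl]
        have hcomm1 : fall ψ (q+1+1+1) (t+1) * Tb ψ (q+1) 1
            = Tb ψ (q+1) 1 * fall ψ (q+1+1+1) (t+1) :=
          ((commute_Tb_fall hc (q+1) 1 (q+1+1+1) (t+1) (by omega)).symm).eq
        have hfg : fall ψ (q+1+1+1) (t+1) * ψ (q+1+1) = fall ψ (q+1+1) (t+1+1) :=
          (fall_succ ψ (q+1+1) (t+1)).symm
        have key : fall ψ (q+1+1+1) (t+1) * (Tb ψ (q+1) 1 * ψ (q+1+1))
            = Tb ψ (q+1) 1 * fall ψ (q+1+1) (t+1+1) := by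
          rw [← mul_assoc, hcomm1, mul_assoc, hfg]
        simp only [add_mul, mul_assoc]
        rw [key]
        abel

lemma bb_one {ψ : ℕ → A} (hc : HC ψ) (s : ℕ) :
    Bb ψ 1 (s+1) = Bb ψ 1 s + fall ψ 1 (s+1) := by
  simpa [Bb_zero_left] using bbA_aux s ψ hc 0 s (by omega)

lemma keyId_aux :
    ∀ (M : ℕ) (ψ : ℕ → A), HB ψ → HC ψ → ∀ m n, m + n ≤ M →
      Bb ψ 1 (m+n) * Bb (shiftFam ψ 1) m n = Bb ψ (m+1) n * Bb ψ 1 m := by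
  intro M
  induction M with
  | zero =>
      intro ψ hb hc m n h
      obtain ⟨rfl, rfl⟩ : m = 0 ∧ n = 0 := by omega
      simp [Bb_zero_left, Bb_zero_right]
  | succ M ih =>
      intro ψ hb hc m n h
      match m, n with
      | m, 0 => simp [Bb_zero_right]
      | 0, s+1 => simp [Bb_zero_left, Bb_zero_right]
      | q+1, s+1 =>
        have hA : Bb ψ 1 (q+1+(s+1)) = Bb ψ 1 (q+1+s) + fall ψ 1 (q+1+s+1) := by
          rw [show q+1+(s+1) = (q+1+s)+1 from by omega]
          exact bb_one hc (q+1+s)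
        have hB : Bb (shiftFam ψ 1) (q+1) (s+1)
            = Bb (shiftFam ψ 1) (q+1) s
              + Bb (shiftFam ψ 1) q (s+1) * fall ψ (q+1+1) (s+1) := by
          have := bbA_aux (q+s) (shiftFam ψ 1) (hc.shift 1) q s le_rfl
          rwa [fall_shift ψ 1 (s+1) (q+1)] at this
        have h1 := ih ψ hb hc (q+1) s (by omega)
        have h2 : Bb ψ 1 (q+1+s) * Bb (shiftFam ψ 1) q (s+1)
            = Bb ψ (q+1) (s+1) * Bb ψ 1 q := by
          have := ih ψ hb hc q (s+1) (by omega)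
          rwa [show q+(s+1) = q+1+s from by omega] at this
        have h3 : Bb ψ 1 q * fall ψ (q+1+1) (s+1) = fall ψ (q+1+1) (s+1) * Bb ψ 1 q :=
          (commute_Bb_fall hc 1 q (s+1) (q+1+1) (by omega)).eq
        have h4 : fall ψ 1 (q+1+s+1) * Bb (shiftFam ψ 1) (q+1) (s+1)
            = Bb ψ (q+1) (s+1) * fall ψ 1 (q+1+s+1) :=
          conj_Bb hb hc (by omega)
        have h5 : fall ψ 1 (q+1+s+1) = fall ψ (q+1+1) (s+1) * fall ψ 1 (q+1) := by
          have := fall_append ψ 1 (s+1) (q+1)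
          rwa [show (s+1)+(q+1) = q+1+s+1 from by omega,
            show 1+(q+1) = q+1+1 from by omega] at this
        have h6 : Bb ψ 1 q + fall ψ 1 (q+1) = Bb ψ 1 (q+1) := (bb_one hc q).symm
        have h7 : Bb ψ (q+1+1) (s+1)
            = Bb ψ (q+1+1) s + Bb ψ (q+1) (s+1) * fall ψ (q+1+1) (s+1) :=
          bbA_aux (q+1+s) ψ hc (q+1) s (by omega)
        calc Bb ψ 1 (q+1+(s+1)) * Bb (shiftFam ψ 1) (q+1) (s+1)
            = Bb ψ 1 (q+1+s) * Bb (shiftFam ψ 1) (q+1) (s+1)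
              + fall ψ 1 (q+1+s+1) * Bb (shiftFam ψ 1) (q+1) (s+1) := by
              rw [hA, add_mul]
          _ = Bb ψ 1 (q+1+s) * Bb (shiftFam ψ 1) (q+1) s
              + (Bb ψ 1 (q+1+s) * Bb (shiftFam ψ 1) q (s+1)) * fall ψ (q+1+1) (s+1)
              + Bb ψ (q+1) (s+1) * fall ψ 1 (q+1+s+1) := by
              rw [h4, hB]; noncomm_ring
          _ = Bb ψ (q+1+1) s * Bb ψ 1 (q+1)
              + Bb ψ (q+1) (s+1) * Bb ψ 1 q * fall ψ (q+1+1) (s+1)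
              + Bb ψ (q+1) (s+1) * (fall ψ (q+1+1) (s+1) * fall ψ 1 (q+1)) := by
              rw [h1, h2, h5]
          _ = Bb ψ (q+1+1) s * Bb ψ 1 (q+1)
              + Bb ψ (q+1) (s+1) * (fall ψ (q+1+1) (s+1) * (Bb ψ 1 q + fall ψ 1 (q+1))) := by
              rw [mul_assoc (Bb ψ (q+1) (s+1)) (Bb ψ 1 q) (fall ψ (q+1+1) (s+1)), h3]
              noncomm_ring
          _ = Bb ψ (q+1+1) s * Bb ψ 1 (q+1)
              + Bb ψ (q+1) (s+1) * fall ψ (q+1+1) (s+1) * Bb ψ 1 (q+1) := by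
              rw [h6]; noncomm_ring
          _ = Bb ψ (q+1+1) (s+1) * Bb ψ 1 (q+1) := by rw [h7]; noncomm_ring

lemma keyId {ψ : ℕ → A} (hb : HB ψ) (hc : HC ψ) (m n : ℕ) :
    Bb ψ 1 (m+n) * Bb (shiftFam ψ 1) m n = Bb ψ (m+1) n * Bb ψ 1 m :=
  keyId_aux (m+n) ψ hb hc m n le_rfl

lemma main_aux :
    ∀ (m : ℕ) (ψ : ℕ → A), HB ψ → HC ψ → ∀ n,
      Sfac ψ (m + n) = Bb ψ m n * (Sfac ψ m * Sfac (shiftFam ψ m) n) := by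
  intro m
  induction m with
  | zero =>
      intro ψ hb hc n
      rw [Bb_zero_left, shiftFam_zero, Nat.zero_add, one_mul]
      show Sfac ψ n = 1 * Sfac ψ n
      rw [one_mul]
  | succ m ihm =>
      intro ψ hb hc n
      rw [show m + 1 + n = (m + n) + 1 from by omega]
      show Bb ψ 1 (m+n) * Sfac (shiftFam ψ 1) (m+n) = _
      rw [ihm (shiftFam ψ 1) (hb.shift 1) (hc.shift 1) n,
        shiftFam_comp ψ 1 m, show 1+m = m+1 from by omega]
      have hs : Sfac ψ (m+1) = Bb ψ 1 m * Sfac (shiftFam ψ 1) m := rfl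
      rw [hs, ← mul_assoc, keyId hb hc m n]
      noncomm_ring

end BraidedFact

/-- the braided factorial factorizes as `S_{m+n} = B(m,n) ∘ (S_m ⊗ S_n)`,
where `S_m` acts on the first `m` strands and `S_n` (shifted by `m`) on the last `n`. -/
theorem braided_factorial_factorization (ψ : ℕ → A)
    (hbraid : ∀ i, ψ i * ψ (i + 1) * ψ i = ψ (i + 1) * ψ i * ψ (i + 1))
    (hcomm : ∀ i j, i + 2 ≤ j → ψ i * ψ j = ψ j * ψ i)
    (m n : ℕ) :
    Sfac ψ (m + n) = Bb ψ m n * (Sfac ψ m * Sfac (shiftFam ψ m) n) := by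
  exact BraidedFact.main_aux m ψ hbraid hcomm n
end

section
/- For diagonal braiding Ψ(x ⊗ x) = q² x ⊗ x on a one-dimensional braided vector space X with basis x, the braided binomial B(r,s) acts on x^{⊗(r+s)} by the scalar [r+s choose r]_{q²}, the Gaussian binomial coefficient at q². -/
/- We work in the braid group algebra, modelled as an associative ring `A` equipped with a
family `ψ i` of elements satisfying the braid relations.  The braided binomials `Bb`
(sums of Matsumoto lifts of shuffle permutations) are encoded through their defining
recursion `B(r+1,s) = B(r,s)^{[1]} + B(r+1,s-1)^{[1]} · T_{r+1,1}`. -/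

variable {A : Type*} [Ring A]

/-- The Gaussian binomial coefficient `[n choose k]_t` via the q-Pascal recursion. -/
def qChoose {R : Type*} [CommRing R] (q : R) : ℕ → ℕ → R
  | _, 0 => 1
  | 0, _ + 1 => 0
  | n + 1, k + 1 => qChoose q n k + q ^ (k + 1) * qChoose q n (k + 1)
lemma qChoose_eq_zero {R : Type*} [CommRing R] (q : R) :
    ∀ n k : ℕ, n < k → qChoose q n k = 0 := by
  intro n
  induction n with
  | zero => intro k hk; cases k with
    | zero => omega
    | succ k => simp [qChoose]
  | succ n ih =>
    intro k hk
    cases k with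
    | zero => omega
    | succ k =>
      rw [qChoose, ih k (by omega), ih (k+1) (by omega)]
      ring

lemma qChoose_self {R : Type*} [CommRing R] (q : R) (n : ℕ) :
    qChoose q n n = 1 := by
  induction n with
  | zero => rfl
  | succ n ih =>
    rw [qChoose, ih, qChoose_eq_zero q n (n+1) (by omega)]
    ring

lemma Tb_const {R : Type*} [CommRing R] (c : R) (m : ℕ) :
    Tb (fun _ : ℕ => c) m 1 = c ^ m := by
  induction m with
  | zero => simp [Tb]
  | succ m ih =>
    rw [Tb, ih]
    show c ^ m * ((1 : R) * c) = c ^ (m + 1)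
    ring

/-- for the diagonal braiding `Ψ(x ⊗ x) = q² x ⊗ x` on a one-dimensional
braided vector space (so that every braid generator acts by the scalar `q²`), the braided
binomial `B(r,s)` acts on `x^{⊗(r+s)}` by the Gaussian binomial `[r+s choose r]_{q²}`. -/
theorem braided_binomial_diagonal {R : Type*} [CommRing R] (q : R) (r s : ℕ) :
    Bb (fun _ : ℕ => q ^ 2) r s = qChoose (q ^ 2) (r + s) r := by
  induction r generalizing s with
  | zero =>
    cases s <;> rw [Bb] <;> simp [qChoose]
  | succ r ih =>
    induction s with
    | zero => rw [Bb]; rw [qChoose_self]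
    | succ s ihs =>
      rw [Bb]
      have h1 : shiftFam (fun _ : ℕ => q ^ 2) 1 = (fun _ : ℕ => q ^ 2) := rfl
      rw [h1, ih (s+1), ihs, Tb_const]
      have : r + 1 + (s + 1) = (r + (s + 1)) + 1 := by omega
      rw [this, qChoose]
      have : r + 1 + s = r + (s + 1) := by omega
      rw [this]
      ring
end
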